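/- Let S be a finitely generated algebra over a commutative perfect ring R, and let I be a proper ideal of S. Then the nilradical of S/I is T-nilpotent; that is, for every sequence a_1, a_2, ... of elements of the radical √I, there exists m > 0 with a_1 a_2 ··· a_m ∈ I. -/

import Mathlib

/-- Descending chain condition on finitely generated ideals (one characterization
of commutative perfect rings). -/
def DCCFGIdeals (R : Type*) [CommRing R] : Prop :=
  ∀ I : ℕ → Ideal R, (∀ m, (I m).FG) → (∀ m, I (m + 1) ≤ I m) →
    ∃ N, ∀ m, N ≤ m → I m = I N

/-!
Passing to `S ⧸ I`, it suffices to show that the nilradical of a finitely generated algebra `S`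
over a perfect ring `R` is T-nilpotent. Let `J` be the Jacobson radical of `R`.

The quotient `R ⧸ J` is reduced and again satisfies DCC on finitely generated ideals, so every
element `a` satisfies `a = a² s` (from `(aⁿ⁺¹) = (aⁿ⁺²)`); hence finitely generated ideals are
generated by idempotents, and taking annihilators turns ascending chains of them into descending
ones, so `R ⧸ J` is Noetherian. Then so is `S ⧸ JS`, and a power `nilradical S ^ n` lies in `JS`:
products of consecutive blocks of `n` nilpotents lie in `JS`.

Finally `JS` is T-nilpotent: each `dₜ ∈ JS` lies in `BₜS` for a finitely generated `Bₜ ⊆ J`, the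
descending chain `B₀ ⋯ Bₘ` stabilizes at some `A = A Bₘ ⊆ J A`, and Nakayama gives `A = 0`.
-/

open Finset

namespace Ideal

variable {R S : Type*} [CommRing R] [CommRing S]

theorem exists_fg_le_map_eq_span {f : R →+* S} {B : Ideal R} {T : Set S} (hT : T ⊆ f '' B)
    (hfin : T.Finite) : ∃ B' ≤ B, B'.FG ∧ B'.map f = span T := by
  obtain ⟨u, hu, hufin, rfl⟩ := Set.exists_subset_image_finite_and.mp ⟨T, hT, hfin, rfl⟩
  exact ⟨span u, span_le.mpr hu, ⟨hufin.toFinset, by simp⟩, map_span f u⟩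

theorem exists_fg_le_map_eq_of_surjective {f : R →+* S} (hf : Function.Surjective f)
    {B : Ideal R} {A : Ideal S} (hA : A.FG) (hAB : A ≤ B.map f) :
    ∃ B' ≤ B, B'.FG ∧ B'.map f = A := by
  obtain ⟨T, rfl⟩ := hA
  refine exists_fg_le_map_eq_span (fun y hy => ?_) T.finite_toSet
  exact (mem_map_iff_of_surjective f hf).mp (hAB (subset_span hy))

theorem exists_fg_le_mem_map {f : R →+* S} {B : Ideal R} {y : S} (hy : y ∈ B.map f) :
    ∃ B' ≤ B, B'.FG ∧ y ∈ B'.map f := by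
  obtain ⟨T, hT, hyT⟩ := Submodule.mem_span_finite_of_mem_span hy
  obtain ⟨B', hB', hfg, hmap⟩ := exists_fg_le_map_eq_span hT T.finite_toSet
  exact ⟨B', hB', hfg, hmap ▸ hyT⟩

end Ideal

theorem Finset.prod_range_mul_eq_prod_range_prod {M : Type*} [CommMonoid M] (f : ℕ → M)
    (n k : ℕ) :
    ∏ i ∈ range (n * k), f i = ∏ t ∈ range k, ∏ j ∈ range n, f (n * t + j) := by
  induction k with
  | zero => simp
  | succ k ih => rw [Nat.mul_succ, prod_range_add, ih, prod_range_succ]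

theorem IsIdempotentElem.annihilator_span_singleton {R : Type*} [CommRing R] {e : R}
    (he : IsIdempotentElem e) : (Ideal.span {e}).annihilator = Ideal.span {1 - e} := by
  ext r
  rw [Ideal.span, Submodule.mem_annihilator_span_singleton, Ideal.mem_span_singleton', smul_eq_mul]
  constructor
  · intro hr
    exact ⟨r, by rw [mul_sub, mul_one, hr, sub_zero]⟩
  · rintro ⟨s, rfl⟩
    rw [mul_assoc, sub_mul, one_mul, he.eq, sub_self, mul_zero]

theorem exists_eq_mul_self_mul_of_pow_succ_dvd {R : Type*} [CommRing R] [IsReduced R] {a : R} {n : ℕ}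
    (h : a ^ (n + 2) ∣ a ^ (n + 1)) : ∃ s, a = a * a * s := by
  obtain ⟨s, hs⟩ := h
  refine ⟨s, sub_eq_zero.mp (IsReduced.eq_zero _ ⟨n + 1, ?_⟩)⟩
  calc (a - a * a * s) ^ (n + 1) = a ^ (n + 1) * (1 - a * s) ^ (n + 1) := by
        rw [← mul_pow, mul_sub, mul_one, mul_assoc]
    _ = (a ^ (n + 1) - a ^ (n + 2) * s) * (1 - a * s) ^ n := by ring
    _ = 0 := by rw [← hs, sub_self, zero_mul]

def Ideal.IsTNilpotent {R : Type*} [CommRing R] (N : Ideal R) : Prop :=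
  ∀ y : ℕ → R, (∀ i, y i ∈ N) → ∃ m, ∏ i ∈ range m, y i = 0

theorem Ideal.IsTNilpotent.of_pow_le {R : Type*} [CommRing R] {M N : Ideal R}
    (hN : N.IsTNilpotent) {n : ℕ} (h : M ^ n ≤ N) : M.IsTNilpotent := by
  intro y hy
  have hblock : ∀ t, ∏ j ∈ range n, y (n * t + j) ∈ N := fun t => h <| by
    simpa using Ideal.prod_mem_prod (s := range n) (I := fun _ => M) fun j _ => hy (n * t + j)
  obtain ⟨k, hk⟩ := hN _ hblock
  exact ⟨n * k, by rw [prod_range_mul_eq_prod_range_prod, hk]⟩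

theorem Ideal.exists_nilradical_pow_le_of_isNoetherianRing_quotient {S : Type*} [CommRing S]
    (Q : Ideal S) [IsNoetherianRing (S ⧸ Q)] : ∃ n, nilradical S ^ n ≤ Q := by
  obtain ⟨n, hn⟩ := IsNoetherianRing.isNilpotent_nilradical (S ⧸ Q)
  have hmap : (nilradical S).map (Quotient.mk Q) ≤ nilradical (S ⧸ Q) :=
    map_le_iff_le_comap.mpr fun _ hx => mem_nilradical.mpr ((mem_nilradical.mp hx).map _)
  refine ⟨n, ?_⟩
  rw [← mk_ker (I := Q), RingHom.ker, ← map_le_iff_le_comap, Ideal.map_pow]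
  exact (pow_le_pow_left' hmap n).trans_eq (hn.trans zero_eq_bot)

namespace DCCFGIdeals

variable {R : Type*} [CommRing R]

theorem of_surjective {R' : Type*} [CommRing R'] (f : R →+* R') (hf : Function.Surjective f)
    (h : DCCFGIdeals R) : DCCFGIdeals R' := by
  intro A hA hdesc
  choose! lift hle hfg hmap using fun (B : Ideal R) m (hAB : A m ≤ B.map f) =>
    Ideal.exists_fg_le_map_eq_of_surjective hf (hA m) hAB
  let B : ℕ → Ideal R := fun m => Nat.rec (lift ⊤ 0) (fun m Bm => lift Bm (m + 1)) m
  have hB : ∀ m, (B m).map f = A m := by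
    intro m
    induction m with
    | zero => exact hmap ⊤ 0 (by simp [Ideal.map_top])
    | succ m ih => exact hmap (B m) (m + 1) (ih ▸ hdesc m)
  have hBfg : ∀ m, (B m).FG := by
    rintro (_ | m)
    · exact hfg ⊤ 0 (by simp [Ideal.map_top])
    · exact hfg (B m) (m + 1) (hB m ▸ hdesc m)
  obtain ⟨N, hN⟩ := h B hBfg fun m => hle (B m) (m + 1) (hB m ▸ hdesc m)
  exact ⟨N, fun m hm => by rw [← hB, ← hB, hN m hm]⟩

theorem wellFoundedLT_fg (h : DCCFGIdeals R) : WellFoundedLT {A : Ideal R // A.FG} := by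
  have : WellFoundedGT {A : Ideal R // A.FG}ᵒᵈ := by
    refine wellFoundedGT_iff_monotone_chain_condition.mpr fun A => ?_
    obtain ⟨N, hN⟩ := h (fun m => (OrderDual.ofDual (A m)).1) (fun m => (A m).2)
      fun m => A.monotone m.le_succ
    exact ⟨N, fun m hm => congrArg OrderDual.toDual (Subtype.ext (hN m hm).symm)⟩
  exact this

theorem exists_pow_succ_dvd (h : DCCFGIdeals R) (a : R) : ∃ n, a ^ (n + 2) ∣ a ^ (n + 1) := by
  obtain ⟨N, hN⟩ := h (fun m => Ideal.span {a ^ (m + 1)}) (fun m => ⟨{a ^ (m + 1)}, by simp⟩)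
    fun m => Ideal.span_singleton_le_span_singleton.mpr (pow_dvd_pow a m.succ.le_succ)
  exact ⟨N, Ideal.span_singleton_le_span_singleton.mp (hN (N + 1) N.le_succ).ge⟩

theorem isIdempotentElem_ideal [IsReduced R] (h : DCCFGIdeals R) (A : Ideal R) :
    IsIdempotentElem A := by
  refine le_antisymm Ideal.mul_le_right fun a ha => ?_
  obtain ⟨n, hn⟩ := h.exists_pow_succ_dvd a
  obtain ⟨s, hs⟩ := exists_eq_mul_self_mul_of_pow_succ_dvd hn
  rw [hs, mul_assoc]
  exact Ideal.mul_mem_mul ha (A.mul_mem_right s ha)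

theorem isNoetherianRing [IsReduced R] (h : DCCFGIdeals R) : IsNoetherianRing R := by
  have hidem : ∀ A : {A : Ideal R // A.FG}, ∃ e, IsIdempotentElem e ∧ A.1 = Ideal.span {e} :=
    fun A => (A.1.isIdempotentElem_iff_of_fg A.2).mp (h.isIdempotentElem_ideal A.1)
  have hann : ∀ A : {A : Ideal R // A.FG},
      A.1.annihilator.FG ∧ A.1.annihilator.annihilator = A.1 := by
    intro A
    obtain ⟨e, he, hA⟩ := hidem A
    rw [hA, he.annihilator_span_singleton, he.one_sub.annihilator_span_singleton, sub_sub_cancel]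
    exact ⟨⟨{1 - e}, by simp⟩, rfl⟩
  let ann : {A : Ideal R // A.FG} → {A : Ideal R // A.FG} :=
    fun A => ⟨A.1.annihilator, (hann A).1⟩
  have hinj : Function.Injective ann := fun A B hAB => Subtype.ext <| by
    rw [← (hann A).2, ← (hann B).2]
    exact congrArg (fun C => C.1.annihilator) hAB
  have hanti : Antitone ann := fun A B hAB => Submodule.annihilator_mono hAB
  have := h.wellFoundedLT_fg
  rw [isNoetherianRing_iff, isNoetherian_iff_fg_wellFounded]
  exact (hanti.strictAnti_of_injective hinj).wellFoundedGT

theorem isNoetherianRing_quotient_jacobson (h : DCCFGIdeals R) :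
    IsNoetherianRing (R ⧸ Ideal.jacobson (⊥ : Ideal R)) :=
  have := (Ideal.isRadical_iff_quotient_reduced _).mp (Ideal.isRadical_jacobson (⊥ : Ideal R))
  (h.of_surjective _ Ideal.Quotient.mk_surjective).isNoetherianRing

theorem exists_nilradical_pow_le_map_jacobson {S : Type*} [CommRing S] [Algebra R S]
    [Algebra.FiniteType R S] (h : DCCFGIdeals R) :
    ∃ n, nilradical S ^ n ≤ (Ideal.jacobson (⊥ : Ideal R)).map (algebraMap R S) := by
  have := h.isNoetherianRing_quotient_jacobson
  have := Algebra.FiniteType.of_restrictScalars_finiteType R (R ⧸ Ideal.jacobson (⊥ : Ideal R))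
    (S ⧸ (Ideal.jacobson (⊥ : Ideal R)).map (algebraMap R S))
  have := Algebra.FiniteType.isNoetherianRing (R ⧸ Ideal.jacobson (⊥ : Ideal R))
    (S ⧸ (Ideal.jacobson (⊥ : Ideal R)).map (algebraMap R S))
  exact Ideal.exists_nilradical_pow_le_of_isNoetherianRing_quotient _

theorem exists_prod_eq_bot (h : DCCFGIdeals R) {B : ℕ → Ideal R} (hfg : ∀ t, (B t).FG)
    (hB : ∀ t, B t ≤ Ideal.jacobson ⊥) : ∃ N, ∏ t ∈ range N, B t = ⊥ := by
  have hAfg : ∀ m, (∏ t ∈ range m, B t).FG := by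
    intro m
    induction m with
    | zero => exact ⟨{1}, by simp⟩
    | succ m ih => exact prod_range_succ B m ▸ ih.mul (hfg m)
  obtain ⟨N, hN⟩ := h (fun m => ∏ t ∈ range m, B t) hAfg
    fun m => prod_range_succ B m ▸ Ideal.mul_le_left
  refine ⟨N, Submodule.eq_bot_of_le_smul_of_le_jacobson_bot _ _ (hAfg N) (le_of_eq ?_) (hB N)⟩
  calc ∏ t ∈ range N, B t = ∏ t ∈ range (N + 1), B t := (hN (N + 1) N.le_succ).symm
    _ = B N • ∏ t ∈ range N, B t := by rw [prod_range_succ, smul_eq_mul, mul_comm]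

theorem isTNilpotent_map_jacobson {S : Type*} [CommRing S] [Algebra R S] (h : DCCFGIdeals R) :
    ((Ideal.jacobson (⊥ : Ideal R)).map (algebraMap R S)).IsTNilpotent := by
  intro d hd
  choose B hBJ hBfg hdB using fun t => Ideal.exists_fg_le_mem_map (hd t)
  obtain ⟨N, hN⟩ := h.exists_prod_eq_bot hBfg hBJ
  have hmem : ∏ t ∈ range N, d t ∈ (∏ t ∈ range N, B t).map (algebraMap R S) := by
    rw [← Ideal.mapHom_apply, map_prod]
    exact Ideal.prod_mem_prod fun t _ => hdB t
  exact ⟨N, by simpa [hN] using hmem⟩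

theorem isTNilpotent_nilradical {S : Type*} [CommRing S] [Algebra R S] [Algebra.FiniteType R S]
    (h : DCCFGIdeals R) : (nilradical S).IsTNilpotent :=
  have ⟨_, hn⟩ := h.exists_nilradical_pow_le_map_jacobson (S := S)
  h.isTNilpotent_map_jacobson.of_pow_le hn

end DCCFGIdeals

theorem stmt_7_general {R : Type*} [CommRing R] {S : Type*} [CommRing S] [Algebra R S]
    (hperf : DCCFGIdeals R) (hfg : Algebra.FiniteType R S)
    (I : Ideal S)
    (a : ℕ → S) (ha : ∀ i, a i ∈ I.radical) :
    ∃ m > 0, ∏ i ∈ Finset.range m, a i ∈ I := by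
  have hnil : ∀ i, Ideal.Quotient.mk I (a i) ∈ nilradical (S ⧸ I) := fun i =>
    have ⟨k, hk⟩ := ha i
    mem_nilradical.mpr ⟨k, by rw [← map_pow, Ideal.Quotient.eq_zero_iff_mem]; exact hk⟩
  obtain ⟨m, hm⟩ := hperf.isTNilpotent_nilradical _ hnil
  refine ⟨m + 1, m.succ_pos, ?_⟩
  rw [prod_range_succ, ← Ideal.Quotient.eq_zero_iff_mem, map_mul, map_prod, hm, zero_mul]

theorem stmt_7 {R : Type*} [CommRing R] {S : Type*} [CommRing S] [Algebra R S]
    (hperf : DCCFGIdeals R) (hfg : Algebra.FiniteType R S)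
    (I : Ideal S) (hI : I ≠ ⊤)
    (a : ℕ → S) (ha : ∀ i, a i ∈ I.radical) :
    ∃ m > 0, ∏ i ∈ Finset.range m, a i ∈ I :=
  stmt_7_general hperf hfg I a ha
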